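/- Suppose that the Credit Invariant and the Partial Solution Invariant hold for T, M, and I, that M has no twin links and no locking links, and that T/I admits no greedy link contraction. Let T' be a semi-closed tree of T/I with |M'| = 0, and let e = a'x ∈ F with a' ∈ L' and x ∈ X'. Then the original endpoint a of e contained in a' (possibly a = a') is not a locked leaf, and thus e contributes a ticket at x. -/
import Mathlib


open scoped Classical

namespace TAP

/-- A rooted tree on vertex set `V`, given by a parent function. -/
structure Tree (V : Type) where
  root : V
  parent : V → V
  parent_root : parent root = root
  reach : ∀ v, ∃ n, parent^[n] v = root

namespace Tree

variable {V : Type} (t : Tree V)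

/-- `t.desc w v` : `v` lies in the rooted subtree `T_w`, i.e. `w` is an ancestor of `v` or `w = v`. -/
def desc (w v : V) : Prop := ∃ n, t.parent^[n] v = w

/-- The depth of a node (its distance to the root). -/
noncomputable def depth (v : V) : ℕ :=
  @Nat.find (fun n => t.parent^[n] v = t.root) (Classical.decPred _) (t.reach v)

/-- `v` is a leaf of the tree: it is not the root and it has no children. -/
def IsLeaf (v : V) : Prop := v ≠ t.root ∧ ∀ u, u ≠ v → t.parent u ≠ v

/-- The tree edge `(w, parent w)` (for `w ≠ root`) lies on the tree path `P(u,v)`. -/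
def onPath (w u v : V) : Prop :=
  (t.desc w u ∧ ¬ t.desc w v) ∨ (t.desc w v ∧ ¬ t.desc w u)

/-- The node `c` lies on the tree path `P(u,v)`. -/
def onPathNode (c u v : V) : Prop :=
  (t.desc c u ∨ t.desc c v) ∧ ∀ w, t.desc w u → t.desc w v → t.desc w c

/-- `u` is the least common ancestor of `a` and `b`. -/
def IsLCA (u a b : V) : Prop :=
  t.desc u a ∧ t.desc u b ∧ ∀ w, t.desc w a → t.desc w b → t.desc w u

end Tree

variable {V : Type} [Fintype V] [DecidableEq V]

/-- The link `e` covers the tree edge `(w, parent w)`. -/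
def covers (t : Tree V) (e : Sym2 V) (w : V) : Prop :=
  ∃ u v, e = s(u, v) ∧ t.onPath w u v

/-- Some link of `F` covers the tree edge `(w, parent w)`. -/
def coveredBy (t : Tree V) (F : Finset (Sym2 V)) (w : V) : Prop :=
  ∃ e ∈ F, covers t e w

/-- `F` covers the tree: every tree edge is covered by some link of `F`
(equivalently, `T ∪ F` is 2-edge-connected). -/
def IsCover (t : Tree V) (F : Finset (Sym2 V)) : Prop :=
  ∀ w, w ≠ t.root → coveredBy t F w

/-- `e'` is a shadow of `e`, i.e. `P(e') ⊆ P(e)`. -/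
def Shadow (t : Tree V) (e' e : Sym2 V) : Prop := ∀ w, covers t e' w → covers t e w

/-- `e'` is a proper shadow of `e`. -/
def ProperShadow (t : Tree V) (e' e : Sym2 V) : Prop :=
  Shadow t e' e ∧ ∃ w, covers t e w ∧ ¬ covers t e' w

/-- The link set `E` is closed under shadows. -/
def ShadowClosed (t : Tree V) (E : Finset (Sym2 V)) : Prop :=
  ∀ e ∈ E, ∀ e' : Sym2 V, ¬ e'.IsDiag → Shadow t e' e → e' ∈ E

/-- `F` is an (inclusion-minimal) shadows-minimal cover: replacing any link of `F` by a
proper shadow of it destroys the covering property. -/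
def ShadowsMinimal (t : Tree V) (F : Finset (Sym2 V)) : Prop :=
  IsCover t F ∧ (∀ e ∈ F, ¬ IsCover t (F.erase e)) ∧
  ∀ e ∈ F, ∀ e' : Sym2 V, ProperShadow t e' e → ¬ IsCover t (insert e' (F.erase e))

/-- `deg Y x` : the number of links of `Y` incident to `x`. -/
noncomputable def deg (Y : Finset (Sym2 V)) (x : V) : ℕ := (Y.filter (fun e => x ∈ e)).card

/-! ### Contraction of a set of links -/

/-- `u` and `v` lie in the same 2-edge-connected component of `T ∪ I`,
i.e. they get identified in `T/I`. -/
def rel (t : Tree V) (I : Finset (Sym2 V)) (u v : V) : Prop :=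
  ∀ w, w ≠ t.root → t.onPath w u v → coveredBy t I w

def relSetoid (t : Tree V) (I : Finset (Sym2 V)) : Setoid V where
  r := rel t I
  iseqv := by
    refine ⟨?_, ?_, ?_⟩
    · intro u w _ hp
      rcases hp with ⟨h1, h2⟩ | ⟨h1, h2⟩ <;> exact absurd h1 h2
    · intro u v h w hw hp
      refine h w hw ?_
      rcases hp with ⟨h1, h2⟩ | ⟨h1, h2⟩
      · exact Or.inr ⟨h1, h2⟩
      · exact Or.inl ⟨h1, h2⟩
    · intro u v x h1 h2 w hw hp
      by_cases hv : t.desc w v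
      · rcases hp with ⟨ha, hb⟩ | ⟨ha, hb⟩
        · exact h2 w hw (Or.inl ⟨hv, hb⟩)
        · exact h1 w hw (Or.inr ⟨hv, hb⟩)
      · rcases hp with ⟨ha, hb⟩ | ⟨ha, hb⟩
        · exact h1 w hw (Or.inl ⟨ha, hv⟩)
        · exact h2 w hw (Or.inr ⟨ha, hv⟩)

/-- The node set of the contracted tree `T/I`. -/
abbrev QT (t : Tree V) (I : Finset (Sym2 V)) : Type := Quotient (relSetoid t I)

noncomputable instance instFintypeQT (t : Tree V) (I : Finset (Sym2 V)) : Fintype (QT t I) :=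
  @Quotient.fintype V _ (relSetoid t I) (Classical.decRel _)

/-- The node of `T/I` corresponding to the node `x` of `T`. -/
def qm (t : Tree V) (I : Finset (Sym2 V)) (x : V) : QT t I := Quotient.mk (relSetoid t I) x

/-- The class of `u` is a (possibly compound) leaf of `T/I`. -/
def qleafRep (t : Tree V) (I : Finset (Sym2 V)) (u : V) : Prop :=
  ¬ rel t I u t.root ∧ ∀ v, rel t I (t.parent v) u → rel t I v u

/-- The class of `u` lies in the rooted subtree of `T/I` rooted at the class of `v`. -/
def qdescRep (t : Tree V) (I : Finset (Sym2 V)) (v u : V) : Prop :=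
  ∃ w, t.desc w u ∧ rel t I w v

/-- The class of `u` is a compound node of `T/I` (a contracted component, or the root). -/
def qcompoundRep (t : Tree V) (I : Finset (Sym2 V)) (u : V) : Prop :=
  (∃ w, w ≠ u ∧ rel t I u w) ∨ rel t I u t.root

/-- The node `x` of `T` lies in the rooted subtree of `T/I` whose root is the class `c`. -/
def inT (t : Tree V) (I : Finset (Sym2 V)) (c : QT t I) (x : V) : Prop :=
  qdescRep t I c.out x

/-- The node `d` of `T/I` lies in the rooted subtree of `T/I` whose root is `c`. -/
def below (t : Tree V) (I : Finset (Sym2 V)) (c d : QT t I) : Prop := inT t I c d.out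

/-- The class of `x` is matched by the matching `M`. -/
def matchedRep (t : Tree V) (I M : Finset (Sym2 V)) (x : V) : Prop :=
  ∃ e ∈ M, ∃ z, z ∈ e ∧ rel t I z x

/-- The class of `x` lies on the path of `T/I` between the classes of `u` and of `v`. -/
def qOnPathNode (t : Tree V) (I : Finset (Sym2 V)) (x u v : V) : Prop :=
  (qdescRep t I x u ∨ qdescRep t I x v) ∧
  ∀ w, qdescRep t I w u → qdescRep t I w v → qdescRep t I w x

/-- The class of `x` is the least common ancestor in `T/I` of the classes of `a` and `b`. -/
def qIsLCA (t : Tree V) (I : Finset (Sym2 V)) (x a b : V) : Prop :=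
  qdescRep t I x a ∧ qdescRep t I x b ∧
  ∀ w, qdescRep t I w a → qdescRep t I w b → qdescRep t I w x

/-- Depth of the class of `x` in `T/I`. -/
noncomputable def qdepth (t : Tree V) (I : Finset (Sym2 V)) (x : V) : ℕ :=
  (Finset.univ.filter (fun w => w ≠ t.root ∧ ¬ coveredBy t I w ∧ t.desc w x)).card

/-- `u` is an up-node of (the class of) `a` in `T/I` : among all links of `E` leaving the
class of `a`, some link from the class of `a` to `u` has its other end as close as possible
to the root. -/
def qUpNode (t : Tree V) (I E : Finset (Sym2 V)) (a u : V) : Prop :=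
  (∃ b, rel t I b a ∧ s(b, u) ∈ E) ∧ ¬ rel t I u a ∧
  ∀ b x, rel t I b a → s(b, x) ∈ E → ¬ rel t I x a → qdepth t I u ≤ qdepth t I x

/-- `s(a,b)` is a twin link of `T/I` : a link of `E` between two distinct leaves of `T/I`
whose contraction results in a new leaf. -/
def qTwinAt (t : Tree V) (I E : Finset (Sym2 V)) (a b : V) : Prop :=
  qleafRep t I a ∧ qleafRep t I b ∧ ¬ rel t I a b ∧ s(a, b) ∈ E ∧
  qleafRep t (insert (s(a, b)) I) a

/-- The class of `x` is a stem of `T/I` : the least common ancestor of the two ends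
of a twin link. -/
def qStem (t : Tree V) (I E : Finset (Sym2 V)) (x : V) : Prop :=
  ∃ a b, qTwinAt t I E a b ∧ qIsLCA t I x a b

/-! ### Twin links, stems, up-links and locked leaves in the original tree -/

/-- `a` and `b` are twins: two leaves such that the contraction of the link `ab`
results in a new leaf. -/
def TwinPair (t : Tree V) (a b : V) : Prop :=
  t.IsLeaf a ∧ t.IsLeaf b ∧ a ≠ b ∧ qleafRep t {s(a, b)} a

/-- `e` is a twin link. -/
def IsTwinLinkE (t : Tree V) (e : Sym2 V) : Prop := ∃ a b, e = s(a, b) ∧ TwinPair t a b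

/-- `x` is a stem: the least common ancestor of two twins. -/
def IsStem (t : Tree V) (E : Finset (Sym2 V)) (x : V) : Prop :=
  ∃ a b, TwinPair t a b ∧ s(a, b) ∈ E ∧ t.IsLCA x a b

noncomputable def stems (t : Tree V) (E : Finset (Sym2 V)) : Finset V :=
  Finset.univ.filter (IsStem t E)

/-- `X = V \ (L ∪ S)`. -/
noncomputable def Xset (t : Tree V) (E : Finset (Sym2 V)) : Finset V :=
  Finset.univ.filter (fun x => ¬ t.IsLeaf x ∧ ¬ IsStem t E x)

/-- `s(a,u)` is the up-link of `a` : among all links of `E` at `a`, its other end `u` is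
as close as possible to the root (`u` is the up-node of `a`). -/
def IsUpLink (t : Tree V) (E : Finset (Sym2 V)) (a u : V) : Prop :=
  s(a, u) ∈ E ∧ ∀ x, s(a, x) ∈ E → t.depth u ≤ t.depth x

/-- The rooted subtree `T_v` is `a`-closed: it contains the up-node of `a`. -/
def AClosed (t : Tree V) (E : Finset (Sym2 V)) (v a : V) : Prop :=
  ∀ u, IsUpLink t E a u → t.desc v u

/-- The rooted proper subtree `T_v` witnesses that the leaf `a` is locked by the link `bb'` :
`L(T_v) = {a,b,b'}`, `ab` is a twin link and `T_v` is `a`-closed. -/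
def LocksAt (t : Tree V) (E : Finset (Sym2 V)) (b b' a v : V) : Prop :=
  v ≠ t.root ∧ s(b, b') ∈ E ∧ b ≠ b' ∧ b' ≠ a ∧
  {x | t.IsLeaf x ∧ t.desc v x} = {a, b, b'} ∧
  TwinPair t a b ∧ s(a, b) ∈ E ∧ AClosed t E v a

/-- The leaf `a` is locked by the link `bb'`. -/
def Locks (t : Tree V) (E : Finset (Sym2 V)) (b b' a : V) : Prop :=
  ∃ v, LocksAt t E b b' a v

def IsLockedLeaf (t : Tree V) (E : Finset (Sym2 V)) (a : V) : Prop :=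
  ∃ b b', Locks t E b b' a

def IsLockingLink (t : Tree V) (E : Finset (Sym2 V)) (e : Sym2 V) : Prop :=
  ∃ b b' a, e = s(b, b') ∧ Locks t E b b' a

/-- `T_v` is the locking tree of `a` (with locking link `bb'`): the minimal rooted subtree
witnessing the lock. -/
def IsLockingTree (t : Tree V) (E : Finset (Sym2 V)) (a b b' v : V) : Prop :=
  LocksAt t E b b' a v ∧ ∀ v', LocksAt t E b b' a v' → t.desc v' v

/-! ### The fixed optimal cover `F` -/

noncomputable def twinCount (t : Tree V) (F : Finset (Sym2 V)) : ℕ :=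
  (F.filter (fun e => IsTwinLinkE t e)).card

/-- `F` is an optimal (minimum-size) shadows-minimal cover of `T` with the maximum
number of twin links. -/
def IsGoodCover (t : Tree V) (E F : Finset (Sym2 V)) : Prop :=
  F ⊆ E ∧ ShadowsMinimal t F ∧
  (∀ F' : Finset (Sym2 V), F' ⊆ E → IsCover t F' → F.card ≤ F'.card) ∧
  (∀ F' : Finset (Sym2 V), F' ⊆ E → ShadowsMinimal t F' → F'.card = F.card →
    twinCount t F' ≤ twinCount t F)

/-! ### Matchings and the lower bound -/

def IsMatching (M : Finset (Sym2 V)) : Prop :=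
  (∀ e ∈ M, ¬ e.IsDiag) ∧ ∀ e ∈ M, ∀ f ∈ M, e ≠ f → ∀ x, x ∈ e → x ∉ f

/-- `E(L,L)` : the links of `E` joining two leaves. -/
noncomputable def leafLinks (t : Tree V) (E : Finset (Sym2 V)) : Finset (Sym2 V) :=
  E.filter (fun e => ∀ x ∈ e, t.IsLeaf x)

/-- `W` : the set of twin links and locking links. -/
noncomputable def Wlinks (t : Tree V) (E : Finset (Sym2 V)) : Finset (Sym2 V) :=
  E.filter (fun e => IsTwinLinkE t e ∨ IsLockingLink t E e)

/-- `M` is a maximum matching in `E(L,L) \ W`. -/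
def IsMaxLeafMatching (t : Tree V) (E M : Finset (Sym2 V)) : Prop :=
  M ⊆ leafLinks t E \ Wlinks t E ∧ IsMatching M ∧
  ∀ M' : Finset (Sym2 V), M' ⊆ leafLinks t E \ Wlinks t E → IsMatching M' → M'.card ≤ M.card

/-- `U` : the set of leaves unmatched by `M`. -/
noncomputable def unmatchedLeaves (t : Tree V) (M : Finset (Sym2 V)) : Finset V :=
  Finset.univ.filter (fun a => t.IsLeaf a ∧ ∀ e ∈ M, a ∉ e)

/-- `M_F = F(L,L) \ W`. -/
noncomputable def MFlinks (t : Tree V) (E F : Finset (Sym2 V)) : Finset (Sym2 V) :=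
  (F.filter (fun e => ∀ x ∈ e, t.IsLeaf x)) \ Wlinks t E

/-- `N = {bb' ∈ M : each of b, b' is unmatched by M_F}`. -/
noncomputable def Nlinks (t : Tree V) (E F M : Finset (Sym2 V)) : Finset (Sym2 V) :=
  M.filter (fun e => ∀ b ∈ e, ∀ f ∈ MFlinks t E F, b ∉ f)

/-- `J` : the set of links of `F` not incident to a locked leaf. -/
noncomputable def Jlinks (t : Tree V) (E F : Finset (Sym2 V)) : Finset (Sym2 V) :=
  F.filter (fun e => ∀ x ∈ e, ¬ IsLockedLeaf t E x)

/-- The lower bound `(3/2)|M| + |U| + (1/2)|N| + (1/2) Σ_{x ∈ X} d_J(x)`. -/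
noncomputable def LB (t : Tree V) (E F M : Finset (Sym2 V)) : ℚ :=
  (3 / 2 : ℚ) * (M.card : ℚ) + ((unmatchedLeaves t M).card : ℚ)
    + (1 / 2 : ℚ) * ((Nlinks t E F M).card : ℚ)
    + (1 / 2 : ℚ) * ∑ x ∈ Xset t E, (deg (Jlinks t E F) x : ℚ)

/-! ### Subtrees of `T/I`, semi-closed trees, credits -/

/-- `T'` (the rooted subtree of `T/I` with root `c`) is `M`-compatible. -/
def MCompatible (t : Tree V) (I M : Finset (Sym2 V)) (c : QT t I) : Prop :=
  ∀ e ∈ M, (∀ x ∈ e, inT t I c x) ∨ (∀ x ∈ e, ¬ inT t I c x)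

/-- `T'` is semi-closed (w.r.t. `M`): `M`-compatible and closed w.r.t. its unmatched leaves. -/
def SemiClosedQ (t : Tree V) (I E M : Finset (Sym2 V)) (c : QT t I) : Prop :=
  MCompatible t I M c ∧
  ∀ x y, s(x, y) ∈ E → inT t I c x → qleafRep t I x → ¬ matchedRep t I M x → inT t I c y

/-- `T'` is minimally semi-closed. -/
def MinSemiClosedQ (t : Tree V) (I E M : Finset (Sym2 V)) (c : QT t I) : Prop :=
  SemiClosedQ t I E M c ∧
  ∀ c' : QT t I, below t I c c' → c' ≠ c → ¬ SemiClosedQ t I E M c'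

/-- `I'` is an exact cover of `T'` : the set of edges of `T/I` covered by `I'` is exactly
the edge set of `T'`. -/
def IsExactCoverQ (t : Tree V) (I : Finset (Sym2 V)) (c : QT t I) (I' : Finset (Sym2 V)) : Prop :=
  ∀ w, w ≠ t.root → ¬ coveredBy t I w → (coveredBy t I' w ↔ inT t I c (t.parent w))

/-- `up(U')` : the set of up-links of the unmatched leaves of `T'`. -/
noncomputable def upOfQ (t : Tree V) (I E M : Finset (Sym2 V)) (c : QT t I) :
    Finset (Sym2 V) :=
  E.filter (fun e => ∃ a u, e = s(a, u) ∧ inT t I c a ∧ qleafRep t I a ∧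
    ¬ matchedRep t I M a ∧ qUpNode t I E a u)

/-- `M` is a matching on the leaves of `T/I`. -/
def IsLeafMatchingQ (t : Tree V) (I M : Finset (Sym2 V)) : Prop :=
  (∀ e ∈ M, ∃ a b, e = s(a, b) ∧ qleafRep t I a ∧ qleafRep t I b ∧ ¬ rel t I a b) ∧
  ∀ e ∈ M, ∀ f ∈ M, e ≠ f → ∀ x, x ∈ e → ∀ y, y ∈ f → ¬ rel t I x y

/-- `L' = L(T')` as a set of nodes of `T/I`. -/
noncomputable def LsetQ (t : Tree V) (I : Finset (Sym2 V)) (c : QT t I) : Finset (QT t I) :=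
  Finset.univ.filter (fun d => below t I c d ∧ qleafRep t I d.out)

/-- `U'` : the `M`-unmatched leaves of `T'`. -/
noncomputable def UsetQ (t : Tree V) (I M : Finset (Sym2 V)) (c : QT t I) : Finset (QT t I) :=
  Finset.univ.filter
    (fun d => below t I c d ∧ qleafRep t I d.out ∧ ¬ matchedRep t I M d.out)

/-- `C'` : the non-leaf compound nodes of `T'`. -/
noncomputable def CsetQ (t : Tree V) (I : Finset (Sym2 V)) (c : QT t I) : Finset (QT t I) :=
  Finset.univ.filter
    (fun d => below t I c d ∧ qcompoundRep t I d.out ∧ ¬ qleafRep t I d.out)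

/-- `M' = M(T')` : the links of `M` with both ends in `T'`. -/
noncomputable def MlinksQ (t : Tree V) (I M : Finset (Sym2 V)) (c : QT t I) :
    Finset (Sym2 V) :=
  M.filter (fun e => ∀ x ∈ e, inT t I c x)

/-- `S'` : the stems of `T'`. -/
noncomputable def SsetQ (t : Tree V) (I E : Finset (Sym2 V)) (c : QT t I) : Finset (QT t I) :=
  Finset.univ.filter (fun d => below t I c d ∧ qStem t I E d.out)

/-- `S'_1` : the stems of `T'` whose twin link lies in `F`. -/
noncomputable def S1setQ (t : Tree V) (I E F : Finset (Sym2 V)) (c : QT t I) :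
    Finset (QT t I) :=
  Finset.univ.filter (fun d => below t I c d ∧
    ∃ a b, qTwinAt t I E a b ∧ s(a, b) ∈ F ∧ qIsLCA t I d.out a b)

/-- `X'` : the original nodes of `T'` lying in `X`. -/
noncomputable def XsetQ (t : Tree V) (I E : Finset (Sym2 V)) (c : QT t I) : Finset (QT t I) :=
  Finset.univ.filter
    (fun d => below t I c d ∧ ¬ qcompoundRep t I d.out ∧ d.out ∈ Xset t E)

/-- `tickets(T') = |N(T')| + Σ_{x ∈ X'} d_J(x)`. -/
noncomputable def ticketsQ (t : Tree V) (I E F M : Finset (Sym2 V)) (c : QT t I) : ℕ :=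
  ((Nlinks t E F M).filter (fun e => ∀ x ∈ e, inT t I c x)).card
    + ∑ d ∈ XsetQ t I E c, deg (Jlinks t E F) d.out

/-- `coupons(T')` : one coupon for each unmatched leaf and each compound node of `T'`,
and `3/2` coupons for each link of `M(T')`. -/
noncomputable def couponsQ (t : Tree V) (I M : Finset (Sym2 V)) (c : QT t I) : ℚ :=
  ((Finset.univ.filter (fun d : QT t I => below t I c d ∧
      ((qleafRep t I d.out ∧ ¬ matchedRep t I M d.out) ∨ qcompoundRep t I d.out))).card : ℚ)
    + (3 / 2 : ℚ) * ((MlinksQ t I M c).card : ℚ)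

/-- `credit(T') = coupons(T') + tickets(T')/2`. -/
noncomputable def creditQ (t : Tree V) (I E F M : Finset (Sym2 V)) (c : QT t I) : ℚ :=
  couponsQ t I M c + (ticketsQ t I E F M c : ℚ) / 2

/-- `T'` is deficient: `credit(T') < |U'| + |M'| + 1`. -/
def DeficientQ (t : Tree V) (I E F M : Finset (Sym2 V)) (c : QT t I) : Prop :=
  creditQ t I E F M c < ((UsetQ t I M c).card : ℚ) + ((MlinksQ t I M c).card : ℚ) + 1

/-! ### Invariants and greedy steps -/

/-- Credit Invariant: the credit of every subtree of `T/I` is distributed as described: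
coupons on unmatched leaves, compound nodes and links of `M`, tickets on links of `N` and
original nodes of `X`. -/
def CreditInvariant (t : Tree V) (E F M I : Finset (Sym2 V)) : Prop :=
  F ⊆ E ∧ M ⊆ E ∧
  ∀ c : QT t I, creditQ t I E F M c = couponsQ t I M c + (ticketsQ t I E F M c : ℚ) / 2

/-- Degree in `T/I` : the number of links of `F` with exactly one end in the class of `x`. -/
noncomputable def qdegQ (t : Tree V) (I F : Finset (Sym2 V)) (x : V) : ℕ :=
  (F.filter (fun e => (∃ z, z ∈ e ∧ rel t I z x) ∧ ∃ z, z ∈ e ∧ ¬ rel t I z x)).card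

/-- Matching Invariant: `M` is a matching on the leaves of `T/I` and `d_F(b) = 1` for
every leaf `b` of `T/I` matched by `M`. -/
def MatchingInvariant (t : Tree V) (F M I : Finset (Sym2 V)) : Prop :=
  IsLeafMatchingQ t I M ∧ ∀ e ∈ M, ∀ b, b ∈ e → qdegQ t I F b = 1

/-- A greedy locking-tree contraction step. -/
def LockStep (t : Tree V) (E M : Finset (Sym2 V)) (I I₂ : Finset (Sym2 V)) : Prop :=
  ∃ a b b' v u,
    IsLockingTree t E a b b' v ∧
    (∀ e ∈ M, a ∉ e) ∧ (∀ e ∈ M, b ∉ e) ∧ (∀ e ∈ M, b' ∉ e) ∧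
    (∀ c c' v', IsLockingTree t E b c c' v' → t.desc v v') ∧
    IsUpLink t E a u ∧ I₂ = I ∪ {s(b, b'), s(a, u)}

/-- A greedy link contraction step: contract a link of `E` joining two `M`-unmatched
leaves of `T/I`. -/
def LinkStep (t : Tree V) (E M : Finset (Sym2 V)) (I I₂ : Finset (Sym2 V)) : Prop :=
  ∃ x y, s(x, y) ∈ E ∧ ¬ rel t I x y ∧ qleafRep t I x ∧ qleafRep t I y ∧
    ¬ matchedRep t I M x ∧ ¬ matchedRep t I M y ∧ I₂ = insert (s(x, y)) I

/-- Contraction of a semi-closed tree with an exact cover. -/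
def SemiStep (t : Tree V) (E M : Finset (Sym2 V)) (I I₂ : Finset (Sym2 V)) : Prop :=
  ∃ (c : QT t I) (I' : Finset (Sym2 V)), I' ⊆ E ∧ SemiClosedQ t I E M c ∧
    IsExactCoverQ t I c I' ∧ I₂ = I ∪ I'

/-- A sequence of greedy locking-tree contractions starting from the empty partial solution. -/
inductive LockPhase {V : Type} [Fintype V] [DecidableEq V]
    (t : Tree V) (E M : Finset (Sym2 V)) : Finset (Sym2 V) → Prop where
  | base : LockPhase t E M ∅
  | step {I I₂ : Finset (Sym2 V)} :
      LockPhase t E M I → LockStep t E M I I₂ → LockPhase t E M I₂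

/-- Partial Solution Invariant: `I` is obtained by first exhausting greedy locking-tree
contractions, and then sequentially applying greedy link contractions or contractions of
semi-closed trees with exact covers. -/
inductive PSI {V : Type} [Fintype V] [DecidableEq V]
    (t : Tree V) (E M : Finset (Sym2 V)) : Finset (Sym2 V) → Prop where
  | start {I : Finset (Sym2 V)} :
      LockPhase t E M I → (∀ I₂, ¬ LockStep t E M I I₂) → PSI t E M I
  | link {I I₂ : Finset (Sym2 V)} : PSI t E M I → LinkStep t E M I I₂ → PSI t E M I₂
  | semi {I I₂ : Finset (Sym2 V)} : PSI t E M I → SemiStep t E M I I₂ → PSI t E M I₂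

/-! ### Dangerous trees -/

/-- The witness structure of a 3-leaf dangerous tree: `a` is the unmatched leaf,
`b, b'` are the matched leaves, `ab' ∈ E`, the contraction of `ab'` does not create a new
leaf, and `T'` is `b`-open. -/
def Witness3 (t : Tree V) (I E M : Finset (Sym2 V)) (c : QT t I) (a b b' : V) : Prop :=
  inT t I c a ∧ inT t I c b ∧ inT t I c b' ∧
  qleafRep t I a ∧ qleafRep t I b ∧ qleafRep t I b' ∧
  ¬ rel t I a b ∧ ¬ rel t I a b' ∧ ¬ rel t I b b' ∧
  ¬ matchedRep t I M a ∧ matchedRep t I M b ∧ matchedRep t I M b' ∧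
  (∃ x y, s(x, y) ∈ E ∧ rel t I x a ∧ rel t I y b' ∧
    ¬ qleafRep t (insert (s(x, y)) I) x) ∧
  (∃ u, qUpNode t I E b u ∧ ¬ inT t I c u)

/-- A 3-leaf dangerous tree. -/
def Dangerous3 (t : Tree V) (I E M : Finset (Sym2 V)) (c : QT t I) : Prop :=
  SemiClosedQ t I E M c ∧ (CsetQ t I c).card = 0 ∧ (MlinksQ t I M c).card = 1 ∧
  (LsetQ t I c).card = 3 ∧ (SsetQ t I E c).card = 0 ∧
  ∃ a b b', Witness3 t I E M c a b b'

/-- A dangerous tree: a 3-leaf dangerous tree, or a 4-leaf tree with one stem, exactly one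
twin of which is matched, such that contracting the twin link yields a 3-leaf dangerous tree. -/
def Dangerous (t : Tree V) (I E M : Finset (Sym2 V)) (c : QT t I) : Prop :=
  Dangerous3 t I E M c ∨
  (SemiClosedQ t I E M c ∧ (CsetQ t I c).card = 0 ∧ (MlinksQ t I M c).card = 1 ∧
    (LsetQ t I c).card = 4 ∧ (SsetQ t I E c).card = 1 ∧
    ∃ a b, qTwinAt t I E a b ∧ inT t I c a ∧ inT t I c b ∧
      (matchedRep t I M a ↔ ¬ matchedRep t I M b) ∧
      Dangerous3 t (insert (s(a, b)) I) E M (qm t (insert (s(a, b)) I) c.out))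

/-! ### The switching construction -/

/-- `W̃` : for every 4-leaf minimally semi-closed (dangerous) tree of `T/I`, its twin link. -/
noncomputable def Wtil (t : Tree V) (I E M : Finset (Sym2 V)) : Finset (Sym2 V) :=
  E.filter (fun e => ∃ (a b : V) (c : QT t I), e = s(a, b) ∧ MinSemiClosedQ t I E M c ∧
    (LsetQ t I c).card = 4 ∧ qTwinAt t I E a b ∧ inT t I c a ∧ inT t I c b)

/-- The canonical ordering witness of a 3-leaf dangerous tree: if both orderings of the
matched leaves qualify, the up-node of `b` is an ancestor of the up-node of `b'`. -/
def Witness3Canon (t : Tree V) (I E M : Finset (Sym2 V)) (c : QT t I) (a b b' : V) : Prop :=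
  Witness3 t I E M c a b b' ∧
  (Witness3 t I E M c a b' b →
    ∃ u u', qUpNode t I E b u ∧ qUpNode t I E b' u' ∧ qdescRep t I u u')

/-- `M̃` is obtained from `M` by switching, in each (3-leaf dangerous) tree `D̃` of `T̃`
corresponding to a minimally semi-closed tree of `T/I`, the matching link `bb'` to `ab'`. -/
def SwitchedMatching (t : Tree V) (I E M Mt : Finset (Sym2 V)) : Prop :=
  ∀ e : Sym2 V, e ∈ Mt ↔
    ((e ∈ M ∧ ∀ c : QT t I, MinSemiClosedQ t I E M c →
        ∀ x, x ∈ e → ¬ inT t (I ∪ Wtil t I E M) (qm t (I ∪ Wtil t I E M) c.out) x) ∨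
     (∃ (c : QT t I) (a b b' x y : V), MinSemiClosedQ t I E M c ∧
        Witness3Canon t (I ∪ Wtil t I E M) E M (qm t (I ∪ Wtil t I E M) c.out) a b b' ∧
        e = s(x, y) ∧ e ∈ E ∧ rel t (I ∪ Wtil t I E M) x a ∧
        rel t (I ∪ Wtil t I E M) y b' ∧
        ¬ qleafRep t (insert e (I ∪ Wtil t I E M)) x))

/-! ### Auxiliary lemmas for Statement 18 -/

section Aux18

namespace Tree

variable {V : Type} (t : Tree V)

lemma desc_refl (v : V) : t.desc v v := ⟨0, rfl⟩

lemma desc_root (v : V) : t.desc t.root v := t.reach v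

lemma desc_trans {u w z : V} (h1 : t.desc u w) (h2 : t.desc w z) : t.desc u z := by
  obtain ⟨n, hn⟩ := h1
  obtain ⟨m, hm⟩ := h2
  exact ⟨n + m, by rw [Function.iterate_add_apply, hm, hn]⟩

lemma desc_total {u w z : V} (h1 : t.desc u z) (h2 : t.desc w z) :
    t.desc u w ∨ t.desc w u := by
  obtain ⟨n, hn⟩ := h1
  obtain ⟨m, hm⟩ := h2
  rcases le_total n m with h | h
  · right
    exact ⟨m - n, by rw [← hn, ← Function.iterate_add_apply, Nat.sub_add_cancel h, hm]⟩
  · left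
    exact ⟨n - m, by rw [← hm, ← Function.iterate_add_apply, Nat.sub_add_cancel h, hn]⟩

lemma iterate_root (n : ℕ) : t.parent^[n] t.root = t.root :=
  Function.iterate_fixed t.parent_root n

lemma depth_spec (v : V) : t.parent^[t.depth v] v = t.root := by
  unfold Tree.depth
  exact @Nat.find_spec _ (Classical.decPred _) (t.reach v)

lemma depth_le {v : V} {n : ℕ} (h : t.parent^[n] v = t.root) : t.depth v ≤ n := by
  unfold Tree.depth
  exact @Nat.find_min' _ (Classical.decPred _) (t.reach v) n h

lemma depth_root : t.depth t.root = 0 :=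
  Nat.le_zero.mp (t.depth_le (by rfl))

lemma depth_eq_zero {v : V} (h : t.depth v = 0) : v = t.root := by
  have h2 := t.depth_spec v
  rw [h] at h2
  simpa using h2

lemma desc_depth_le {u v : V} (h : t.desc u v) : t.depth u ≤ t.depth v := by
  obtain ⟨n, hn⟩ := h
  by_cases hle : n ≤ t.depth v
  · have h2 : t.parent^[t.depth v - n] u = t.root := by
      rw [← hn, ← Function.iterate_add_apply, Nat.sub_add_cancel hle]
      exact t.depth_spec v
    have := t.depth_le h2
    omega
  · have hu : u = t.root := by
      rw [← hn, show n = (n - t.depth v) + t.depth v by omega,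
        Function.iterate_add_apply, t.depth_spec v, t.iterate_root]
    rw [hu, t.depth_root]
    omega

lemma desc_eq_of_depth_le {u v : V} (h : t.desc u v) (hd : t.depth v ≤ t.depth u) :
    u = v := by
  obtain ⟨n, hn⟩ := h
  by_cases hle : n ≤ t.depth v
  · have h2 : t.parent^[t.depth v - n] u = t.root := by
      rw [← hn, ← Function.iterate_add_apply, Nat.sub_add_cancel hle]
      exact t.depth_spec v
    have h3 := t.depth_le h2
    have hn0 : n = 0 := by omega
    rw [hn0] at hn
    simpa using hn.symm
  · have hu : u = t.root := by
      rw [← hn, show n = (n - t.depth v) + t.depth v by omega,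
        Function.iterate_add_apply, t.depth_spec v, t.iterate_root]
    have hv : v = t.root := t.depth_eq_zero (by rw [hu, t.depth_root] at hd; omega)
    rw [hu, hv]

lemma desc_antisymm {u v : V} (h1 : t.desc u v) (h2 : t.desc v u) : u = v :=
  t.desc_eq_of_depth_le h1 (t.desc_depth_le h2)

lemma leaf_no_desc {b : V} (hb : t.IsLeaf b) :
    ∀ n z, t.parent^[n] z = b → z = b := by
  intro n
  induction n with
  | zero => intro z hn; exact hn
  | succ n ih =>
    intro z hn
    rw [Function.iterate_succ_apply'] at hn
    by_cases hu : t.parent^[n] z = b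
    · exact ih z hu
    · exact absurd hn (hb.2 _ hu)

lemma leaf_desc_eq {b z : V} (hb : t.IsLeaf b) (h : t.desc b z) : z = b := by
  obtain ⟨n, hn⟩ := h
  exact t.leaf_no_desc hb n z hn

lemma depth_parent {u : V} (h : u ≠ t.root) :
    t.depth u = t.depth (t.parent u) + 1 := by
  have h0 : t.depth u ≠ 0 := fun hh => h (t.depth_eq_zero hh)
  have h1 : t.depth u ≤ t.depth (t.parent u) + 1 :=
    t.depth_le (by rw [Function.iterate_succ_apply]; exact t.depth_spec _)
  have h2 : t.depth (t.parent u) ≤ t.depth u - 1 := by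
    refine t.depth_le ?_
    have h3 : t.parent^[(t.depth u - 1) + 1] u = t.root := by
      rw [Nat.sub_add_cancel (by omega)]; exact t.depth_spec u
    rwa [Function.iterate_succ_apply] at h3
  omega

lemma desc_parent_of_desc {s w : V} (h : t.desc s w) (hne : w ≠ s) :
    t.desc s (t.parent w) := by
  obtain ⟨n, hn⟩ := h
  cases n with
  | zero => simp only [Function.iterate_zero_apply] at hn; exact absurd hn hne
  | succ m =>
    rw [Function.iterate_succ_apply] at hn
    exact ⟨m, hn⟩

lemma desc_parent_anc {w a : V} (h : t.desc w a) : t.desc (t.parent w) a := by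
  obtain ⟨k, hk⟩ := h
  exact ⟨k + 1, by rw [Function.iterate_succ_apply', hk]⟩

lemma exists_lca [Fintype V] (x y : V) :
    ∃ m, t.desc m x ∧ t.desc m y ∧ ∀ w, t.desc w x → t.desc w y → t.desc w m := by
  classical
  obtain ⟨m, hm, hmax⟩ := Finset.exists_max_image
    (Finset.univ.filter fun w => t.desc w x ∧ t.desc w y) t.depth
    ⟨t.root, Finset.mem_filter.mpr ⟨Finset.mem_univ _, t.desc_root x, t.desc_root y⟩⟩
  obtain ⟨-, hmx, hmy⟩ := Finset.mem_filter.mp hm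
  refine ⟨m, hmx, hmy, fun w hwx hwy => ?_⟩
  rcases t.desc_total hwx hmx with h | h
  · exact h
  · have heq := t.desc_eq_of_depth_le h
      (hmax w (Finset.mem_filter.mpr ⟨Finset.mem_univ _, hwx, hwy⟩))
    rw [heq]
    exact t.desc_refl w

lemma exists_edge_desc {z y : V} (hzy : t.desc z y) (hne : z ≠ y) :
    ∃ w, w ≠ t.root ∧ t.desc w y ∧ ¬ t.desc w z := by
  classical
  have H : ∃ n, t.parent^[n] y = z := hzy
  have hpos : 0 < Nat.find H := by
    rcases Nat.eq_zero_or_pos (Nat.find H) with h | h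
    · exfalso
      have h2 := Nat.find_spec H
      rw [h] at h2
      simp only [Function.iterate_zero_apply] at h2
      exact hne h2.symm
    · exact h
  set w := t.parent^[Nat.find H - 1] y with hw
  have hwpar : t.parent w = z := by
    have h5 := Nat.find_spec H
    rw [show Nat.find H = (Nat.find H - 1) + 1 by omega,
      Function.iterate_succ_apply'] at h5
    rw [hw]
    exact h5
  have hwdesc : t.desc w y := ⟨Nat.find H - 1, hw.symm⟩
  have hwnez : w ≠ z := by
    intro hh
    exact Nat.find_min H (show Nat.find H - 1 < Nat.find H by omega) (hw.symm.trans hh)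
  have hndesc : ¬ t.desc w z := by
    intro hd
    exact hwnez (t.desc_antisymm hd ⟨1, by simpa using hwpar⟩)
  have hwroot : w ≠ t.root := by
    intro hh
    have hz : z = t.root := by rw [← hwpar, hh, t.parent_root]
    exact Nat.find_min H (show Nat.find H - 1 < Nat.find H by omega)
      (by rw [← hw, hh, hz])
  exact ⟨w, hwroot, hwdesc, hndesc⟩

lemma exists_edge {z y : V} (hne : z ≠ y) :
    ∃ w, w ≠ t.root ∧ t.onPath w z y := by
  by_cases h1 : t.desc z y
  · obtain ⟨w, hr, hd, hnd⟩ := t.exists_edge_desc h1 hne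
    exact ⟨w, hr, Or.inr ⟨hd, hnd⟩⟩
  · by_cases h2 : t.desc y z
    · obtain ⟨w, hr, hd, hnd⟩ := t.exists_edge_desc h2 (Ne.symm hne)
      exact ⟨w, hr, Or.inl ⟨hd, hnd⟩⟩
    · exact ⟨z, fun hh => h1 (by rw [hh]; exact t.desc_root y),
        Or.inl ⟨t.desc_refl z, h1⟩⟩

end Tree

end Aux18

section Aux18b

variable {V : Type} [Fintype V] [DecidableEq V] {t : Tree V}

lemma rel_refl (t : Tree V) (I : Finset (Sym2 V)) (u : V) : rel t I u u :=
  (relSetoid t I).iseqv.refl u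

lemma rel_symm {I : Finset (Sym2 V)} {u v : V} (h : rel t I u v) : rel t I v u :=
  (relSetoid t I).iseqv.symm h

lemma rel_trans {I : Finset (Sym2 V)} {u v w : V} (h1 : rel t I u v) (h2 : rel t I v w) :
    rel t I u w :=
  (relSetoid t I).iseqv.trans h1 h2

lemma rel_mono {I I₂ : Finset (Sym2 V)} (hsub : I ⊆ I₂) {u v : V} (h : rel t I u v) :
    rel t I₂ u v := fun w hw hp => by
  obtain ⟨e, he, hc⟩ := h w hw hp
  exact ⟨e, hsub he, hc⟩

lemma rel_of_link_mem {I : Finset (Sym2 V)} {u v : V} (h : s(u, v) ∈ I) : rel t I u v :=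
  fun w _ hp => ⟨s(u, v), h, u, v, rfl, hp⟩

lemma rel_empty_eq {z y : V} (h : rel t ∅ z y) : z = y := by
  by_contra hne
  obtain ⟨w, hw, hp⟩ := t.exists_edge hne
  obtain ⟨e, he, -⟩ := h w hw hp
  exact absurd he (Finset.notMem_empty e)

lemma rel_ancestor {I : Finset (Sym2 V)} {z y w : V} (h : rel t I z y)
    (hwy : t.desc w y) (hwz : ¬ t.desc w z) : rel t I w y := by
  intro w'' hw'' hp
  rcases hp with ⟨h1, h2⟩ | ⟨h1, h2⟩
  · exact absurd (t.desc_trans h1 hwy) h2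
  · refine h w'' hw'' (Or.inr ⟨h1, fun hz' => ?_⟩)
    rcases t.desc_total h1 hwy with hc | hc
    · exact h2 hc
    · exact hwz (t.desc_trans hc hz')

lemma rel_lca {I : Finset (Sym2 V)} {z y m : V} (h : rel t I z y)
    (hmy : t.desc m y)
    (hmax : ∀ w, t.desc w z → t.desc w y → t.desc w m) : rel t I m y := by
  intro w'' hw'' hp
  rcases hp with ⟨h1, h2⟩ | ⟨h1, h2⟩
  · exact absurd (t.desc_trans h1 hmy) h2
  · exact h w'' hw'' (Or.inr ⟨h1, fun hz' => h2 (hmax w'' hz' h1)⟩)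

lemma covers_mem_leaf {e : Sym2 V} {b : V} (hb : t.IsLeaf b) (hc : covers t e b) :
    b ∈ e := by
  obtain ⟨u, v, heq, hp⟩ := hc
  rcases hp with ⟨h1, -⟩ | ⟨h1, -⟩
  · rw [heq]; exact Sym2.mem_iff.mpr (Or.inl (t.leaf_desc_eq hb h1).symm)
  · rw [heq]; exact Sym2.mem_iff.mpr (Or.inr (t.leaf_desc_eq hb h1).symm)

lemma exists_link_at_leaf {I : Finset (Sym2 V)} {b : V} (hb : t.IsLeaf b)
    (hcb : coveredBy t I b) : ∃ q, s(b, q) ∈ I := by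
  obtain ⟨e, he, hc⟩ := hcb
  have hbe := covers_mem_leaf hb hc
  exact ⟨Sym2.Mem.other hbe, by rwa [Sym2.other_spec hbe]⟩

lemma coveredBy_at_leaf {I : Finset (Sym2 V)} {z b : V} (hb : t.IsLeaf b)
    (h : rel t I z b) (hne : z ≠ b) : coveredBy t I b :=
  h b hb.1 (Or.inr ⟨t.desc_refl b, fun hd => hne (t.leaf_desc_eq hb hd)⟩)

lemma trivial_class_contra {E I : Finset (Sym2 V)} {b : V}
    (hnd : ∀ e ∈ E, ¬ e.IsDiag) (hIE : I ⊆ E) (hb : t.IsLeaf b)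
    (htriv : ∀ z, rel t I z b → z = b) (hcb : coveredBy t I b) : False := by
  obtain ⟨q, hq⟩ := exists_link_at_leaf hb hcb
  have hqb := htriv q (rel_symm (rel_of_link_mem hq))
  rw [hqb] at hq
  exact hnd _ (hIE hq) (Sym2.mk_isDiag_iff.mpr rfl)

lemma inT_def {I : Finset (Sym2 V)} {c : QT t I} {x : V} :
    inT t I c x ↔ ∃ w, t.desc w x ∧ rel t I w c.out := Iff.rfl

lemma inT_of_rel {I : Finset (Sym2 V)} {c : QT t I} {z y : V} (h : rel t I z y)
    (hy : inT t I c y) : inT t I c z := by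
  obtain ⟨w, hw, hr⟩ := inT_def.mp hy
  by_cases hd : t.desc w z
  · exact inT_def.mpr ⟨w, hd, hr⟩
  · have h2 := rel_ancestor h hw hd
    exact inT_def.mpr ⟨z, t.desc_refl z, rel_trans (rel_trans h (rel_symm h2)) hr⟩

lemma inT_desc {I : Finset (Sym2 V)} {c : QT t I} {x y : V} (hx : inT t I c x)
    (h : t.desc x y) : inT t I c y := by
  obtain ⟨w, hw, hr⟩ := inT_def.mp hx
  exact inT_def.mpr ⟨w, t.desc_trans hw h, hr⟩

lemma qleaf_transport {I : Finset (Sym2 V)} {u u' : V} (h : rel t I u u')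
    (hq : qleafRep t I u) : qleafRep t I u' :=
  ⟨fun hr => hq.1 (rel_trans h hr),
   fun v hv => rel_trans (hq.2 v (rel_trans hv (rel_symm h))) h⟩

lemma qleaf_of_trivial {I : Finset (Sym2 V)} {b : V} (hb : t.IsLeaf b)
    (htriv : ∀ z, rel t I z b → z = b) : qleafRep t I b := by
  constructor
  · intro hr
    exact hb.1 (htriv t.root (rel_symm hr)).symm
  · intro v hv
    have hpv := htriv _ hv
    by_cases hvb : v = b
    · rw [hvb]; exact rel_refl t I b
    · exact absurd hpv (hb.2 v hvb)

lemma exists_leaf_rep {I : Finset (Sym2 V)} {y : V} (hq : qleafRep t I y) :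
    ∃ ℓ, t.IsLeaf ℓ ∧ rel t I ℓ y := by
  obtain ⟨ℓ, hℓ, hmax⟩ := Finset.exists_max_image
    (Finset.univ.filter fun z => rel t I z y) t.depth
    ⟨y, Finset.mem_filter.mpr ⟨Finset.mem_univ _, rel_refl t I y⟩⟩
  have hrel : rel t I ℓ y := (Finset.mem_filter.mp hℓ).2
  have hlroot : ℓ ≠ t.root := by
    intro hh
    rw [hh] at hrel
    exact hq.1 (rel_symm hrel)
  refine ⟨ℓ, ⟨hlroot, fun u hu hpu => ?_⟩, hrel⟩
  have huroot : u ≠ t.root := by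
    intro hh
    rw [hh, t.parent_root] at hpu
    exact hu (hh.trans hpu)
  have h1 : rel t I (t.parent u) y := by rw [hpu]; exact hrel
  have h2 : rel t I u y := hq.2 u h1
  have h3 : t.depth u ≤ t.depth ℓ :=
    hmax u (Finset.mem_filter.mpr ⟨Finset.mem_univ _, h2⟩)
  have h4 : t.depth u = t.depth ℓ + 1 := by rw [t.depth_parent huroot, hpu]
  omega

lemma unmatched_of_inT {E I M : Finset (Sym2 V)} {c : QT t I} {y : V}
    (hsc : SemiClosedQ t I E M c) (hM0 : (MlinksQ t I M c).card = 0)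
    (hy : inT t I c y) : ¬ matchedRep t I M y := by
  rintro ⟨e, he, z, hz, hr⟩
  rcases hsc.1 e he with hall | hnone
  · have hmem : e ∈ MlinksQ t I M c := Finset.mem_filter.mpr ⟨he, hall⟩
    rw [Finset.card_eq_zero.mp hM0] at hmem
    exact absurd hmem (Finset.notMem_empty e)
  · exact hnone z hz (inT_of_rel hr hy)

lemma notmem_of_unmatched {I M : Finset (Sym2 V)} {y : V}
    (h : ¬ matchedRep t I M y) : ∀ e ∈ M, y ∉ e :=
  fun e he hy => h ⟨e, he, y, hy, rel_refl t I y⟩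

lemma inT_between {I : Finset (Sym2 V)} {c : QT t I} {A B s g : V}
    (hia : inT t I c A) (hib : inT t I c B)
    (hsA : t.desc s A) (hsB : t.desc s B)
    (hsmax : ∀ w, t.desc w A → t.desc w B → t.desc w s)
    (hgA : t.desc g A) (hsg : t.desc s g) : inT t I c g := by
  obtain ⟨w₃, h₃, hr₃⟩ := inT_def.mp hia
  by_cases hc1 : t.desc w₃ g
  · exact inT_def.mpr ⟨w₃, hc1, hr₃⟩
  obtain ⟨w₅, h₅, hr₅⟩ := inT_def.mp hib
  by_cases hc2 : t.desc w₅ g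
  · exact inT_def.mpr ⟨w₅, hc2, hr₅⟩
  have hgw₃ : t.desc g w₃ := (t.desc_total h₃ hgA).resolve_left hc1
  have hsw₅ : t.desc s w₅ := by
    rcases t.desc_total h₅ hsB with h | h
    · exact absurd (t.desc_trans h hsg) hc2
    · exact h
  have hmax' : ∀ w, t.desc w w₃ → t.desc w w₅ → t.desc w s :=
    fun w hw3 hw5 => hsmax w (t.desc_trans hw3 h₃) (t.desc_trans hw5 h₅)
  have h35 : rel t I w₃ w₅ := rel_trans hr₃ (rel_symm hr₅)
  exact inT_def.mpr ⟨s, hsg, rel_trans (rel_lca h35 hsw₅ hmax') hr₅⟩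

lemma twin_symm {a b : V} (htw : TwinPair t a b) : TwinPair t b a := by
  refine ⟨htw.2.1, htw.1, Ne.symm htw.2.2.1, ?_⟩
  have hset : ({s(b, a)} : Finset (Sym2 V)) = {s(a, b)} := by rw [Sym2.eq_swap]
  rw [hset]
  exact qleaf_transport (rel_of_link_mem (Finset.mem_singleton_self _)) htw.2.2.2

lemma twin_leaves {a b : V} (htw : TwinPair t a b) (s : V)
    (hsa : t.desc s a) (hsb : t.desc s b)
    (hsmax : ∀ w, t.desc w a → t.desc w b → t.desc w s)
    {ℓ : V} (hl : t.IsLeaf ℓ) (hd : t.desc s ℓ) : ℓ = a ∨ ℓ = b := by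
  have hrel0 : rel t {s(a, b)} s a := by
    intro w hw hp
    rcases hp with ⟨h1, h2⟩ | ⟨h1, h2⟩
    · exact absurd (t.desc_trans h1 hsa) h2
    · exact ⟨s(a, b), Finset.mem_singleton_self _, a, b, rfl,
        Or.inl ⟨h1, fun hb' => h2 (hsmax w h1 hb')⟩⟩
  have hstep : ∀ n z, t.parent^[n] z = s → rel t {s(a, b)} z a := by
    intro n
    induction n with
    | zero => intro z hz; rw [show z = s from hz]; exact hrel0
    | succ n ih =>
      intro z hz
      rw [Function.iterate_succ_apply] at hz
      exact htw.2.2.2.2 z (ih _ hz)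
  have hrelℓ : rel t {s(a, b)} ℓ a := by
    obtain ⟨n, hn⟩ := hd
    exact hstep n ℓ hn
  by_contra hno
  push_neg at hno
  obtain ⟨e, he, hc⟩ := hrelℓ ℓ hl.1
    (Or.inl ⟨t.desc_refl ℓ, fun hda => hno.1 (t.leaf_desc_eq hl hda).symm⟩)
  rw [Finset.mem_singleton] at he
  subst he
  obtain ⟨u', v', heq, hp⟩ := hc
  rcases Sym2.eq_iff.mp heq with ⟨hu, hv⟩ | ⟨hu, hv⟩
  · rw [← hu, ← hv] at hp
    rcases hp with ⟨h1, -⟩ | ⟨h1, -⟩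
    · exact hno.1 (t.leaf_desc_eq hl h1).symm
    · exact hno.2 (t.leaf_desc_eq hl h1).symm
  · rw [← hu, ← hv] at hp
    rcases hp with ⟨h1, -⟩ | ⟨h1, -⟩
    · exact hno.2 (t.leaf_desc_eq hl h1).symm
    · exact hno.1 (t.leaf_desc_eq hl h1).symm

lemma twin_unique {x y z : V} (h1 : TwinPair t x y) (h2 : TwinPair t x z) : y = z := by
  obtain ⟨s1, hs1x, hs1y, hmax1⟩ := t.exists_lca x y
  obtain ⟨s2, hs2x, hs2z, hmax2⟩ := t.exists_lca x z
  rcases t.desc_total hs1x hs2x with h | h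
  · rcases twin_leaves h1 s1 hs1x hs1y hmax1 h2.2.1 (t.desc_trans h hs2z) with hz | hz
    · exact absurd hz.symm h2.2.2.1
    · exact hz.symm
  · rcases twin_leaves h2 s2 hs2x hs2z hmax2 h1.2.1 (t.desc_trans h hs1y) with hy | hy
    · exact absurd hy.symm h1.2.2.1
    · exact hy

lemma exists_uplink {E : Finset (Sym2 V)} {α : V} (h : ∃ x, s(α, x) ∈ E) :
    ∃ u, IsUpLink t E α u := by
  obtain ⟨x0, hx0⟩ := h
  obtain ⟨u, hu, hmin⟩ := Finset.exists_min_image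
    (Finset.univ.filter fun x => s(α, x) ∈ E) t.depth
    ⟨x0, Finset.mem_filter.mpr ⟨Finset.mem_univ _, hx0⟩⟩
  exact ⟨u, (Finset.mem_filter.mp hu).2,
    fun x hx => hmin x (Finset.mem_filter.mpr ⟨Finset.mem_univ _, hx⟩)⟩

lemma locksAt_mem {E : Finset (Sym2 V)} {β β' α v : V}
    (h : LocksAt t E β β' α v) (x₀ : V) :
    (t.IsLeaf x₀ ∧ t.desc v x₀) ↔ (x₀ = α ∨ x₀ = β ∨ x₀ = β') := by
  have h5 := h.2.2.2.2.1
  constructor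
  · intro hx
    have hx' : x₀ ∈ ({α, β, β'} : Set V) := by rw [← h5]; exact hx
    simpa using hx'
  · intro hx
    have hx' : x₀ ∈ ({α, β, β'} : Set V) := by simpa using hx
    rw [← h5] at hx'
    exact hx'

lemma locksAt_desc_locked {E : Finset (Sym2 V)} {β β' α v : V}
    (h : LocksAt t E β β' α v) : t.desc v α :=
  ((locksAt_mem h α).mpr (Or.inl rfl)).2

lemma locksAt_desc_snd {E : Finset (Sym2 V)} {β β' α v : V}
    (h : LocksAt t E β β' α v) : t.desc v β :=
  ((locksAt_mem h β).mpr (Or.inr (Or.inl rfl))).2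

lemma locksAt_desc_thd {E : Finset (Sym2 V)} {β β' α v : V}
    (h : LocksAt t E β β' α v) : t.desc v β' :=
  ((locksAt_mem h β').mpr (Or.inr (Or.inr rfl))).2

lemma locksAt_leaf_thd {E : Finset (Sym2 V)} {β β' α v : V}
    (h : LocksAt t E β β' α v) : t.IsLeaf β' :=
  ((locksAt_mem h β').mpr (Or.inr (Or.inr rfl))).1

lemma exists_locking_tree {E : Finset (Sym2 V)} {β β' α v : V}
    (h : LocksAt t E β β' α v) : ∃ v₁, IsLockingTree t E α β β' v₁ := by
  obtain ⟨v₁, hv₁, hmax⟩ := Finset.exists_max_image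
    (Finset.univ.filter fun w => LocksAt t E β β' α w) t.depth
    ⟨v, Finset.mem_filter.mpr ⟨Finset.mem_univ _, h⟩⟩
  have hL₁ : LocksAt t E β β' α v₁ := (Finset.mem_filter.mp hv₁).2
  refine ⟨v₁, hL₁, fun v' hv' => ?_⟩
  rcases t.desc_total (locksAt_desc_locked hv') (locksAt_desc_locked hL₁) with hc | hc
  · exact hc
  · have heq := t.desc_eq_of_depth_le hc
      (hmax v' (Finset.mem_filter.mpr ⟨Finset.mem_univ _, hv'⟩))
    rw [heq]
    exact t.desc_refl v'

end Aux18b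

section Aux18c

variable {V : Type} [Fintype V] [DecidableEq V] {t : Tree V}

/-- No admissible greedy locking-tree configuration exists at all (the existence of such a
configuration does not depend on the current partial solution `I`). -/
def NoLockCfg (t : Tree V) (E M : Finset (Sym2 V)) : Prop :=
  ∀ a b b' v u : V,
    ¬(IsLockingTree t E a b b' v ∧ (∀ e ∈ M, a ∉ e) ∧ (∀ e ∈ M, b ∉ e) ∧
      (∀ e ∈ M, b' ∉ e) ∧ (∀ c c' v', IsLockingTree t E b c c' v' → t.desc v v') ∧
      IsUpLink t E a u)

lemma psi_gnl {E M I : Finset (Sym2 V)} (h : PSI t E M I) : NoLockCfg t E M := by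
  induction h with
  | @start I h1 h2 =>
    intro a b b' v u hcfg
    exact h2 (I ∪ {s(b, b'), s(a, u)})
      ⟨a, b, b', v, u, hcfg.1, hcfg.2.1, hcfg.2.2.1, hcfg.2.2.2.1,
       hcfg.2.2.2.2.1, hcfg.2.2.2.2.2, rfl⟩
  | link _ _ ih => exact ih
  | semi _ _ ih => exact ih

lemma lockphase_empty {E M I : Finset (Sym2 V)} (hGNL : NoLockCfg t E M)
    (h : LockPhase t E M I) : I = ∅ := by
  induction h with
  | base => rfl
  | step h1 h2 ih =>
    obtain ⟨a, b, b', v, u, hT, ha, hb, hb', htb, hup, -⟩ := h2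
    exact absurd ⟨hT, ha, hb, hb', htb, hup⟩ (hGNL a b b' v u)

lemma lockphase_subE {E M I : Finset (Sym2 V)} (h : LockPhase t E M I) : I ⊆ E := by
  induction h with
  | base => exact Finset.empty_subset E
  | step h1 h2 ih =>
    obtain ⟨a, b, b', v, u, hT, -, -, -, -, hup, rfl⟩ := h2
    refine Finset.union_subset ih ?_
    intro e he
    rcases Finset.mem_insert.mp he with rfl | he
    · exact hT.1.2.1
    · rw [Finset.mem_singleton] at he
      rw [he]
      exact hup.1

lemma psi_subE {E M I : Finset (Sym2 V)} (h : PSI t E M I) : I ⊆ E := by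
  induction h with
  | start h1 _ => exact lockphase_subE h1
  | link _ h2 ih =>
    obtain ⟨x, y, hxy, -, -, -, -, -, rfl⟩ := h2
    exact Finset.insert_subset hxy ih
  | semi _ h2 ih =>
    obtain ⟨c₁, I', hI', -, -, rfl⟩ := h2
    exact Finset.union_subset ih hI'

/-- KEY: if `a` is locked by `bb'` and `a`, `b`, `b'` are all unmatched by `M`,
then a greedy locking-tree contraction is available — contradiction. -/
lemma key_contra {E M : Finset (Sym2 V)} {a b b' v : V}
    (hGNL : NoLockCfg t E M) (hL : LocksAt t E b b' a v)
    (hA : ∀ e ∈ M, a ∉ e) (hB : ∀ e ∈ M, b ∉ e) (hB' : ∀ e ∈ M, b' ∉ e) : False := by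
  have htw : TwinPair t a b := hL.2.2.2.2.2.1
  have htw' : TwinPair t b a := twin_symm htw
  have habE : s(a, b) ∈ E := hL.2.2.2.2.2.2.1
  have hb'leaf : t.IsLeaf b' := locksAt_leaf_thd hL
  obtain ⟨v₂, hv₂⟩ := exists_locking_tree hL
  have hv₂R : v₂ ∈ Finset.univ.filter
      (fun w => (∃ β₁, IsLockingTree t E a b β₁ w) ∨ (∃ β₁, IsLockingTree t E b a β₁ w)) :=
    Finset.mem_filter.mpr ⟨Finset.mem_univ _, Or.inl ⟨b', hv₂⟩⟩
  obtain ⟨w₀, hw₀R, hwmin⟩ := Finset.exists_min_image _ t.depth ⟨v₂, hv₂R⟩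
  have hdesca : ∀ w ∈ Finset.univ.filter
      (fun w => (∃ β₁, IsLockingTree t E a b β₁ w) ∨ (∃ β₁, IsLockingTree t E b a β₁ w)),
      t.desc w a := by
    intro w hw
    rcases (Finset.mem_filter.mp hw).2 with ⟨β₁, hT⟩ | ⟨β₁, hT⟩
    · exact locksAt_desc_locked hT.1
    · exact locksAt_desc_snd hT.1
  have hmind : ∀ w ∈ Finset.univ.filter
      (fun w => (∃ β₁, IsLockingTree t E a b β₁ w) ∨ (∃ β₁, IsLockingTree t E b a β₁ w)),
      t.desc w₀ w := by
    intro w hw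
    rcases t.desc_total (hdesca w₀ hw₀R) (hdesca w hw) with hc | hc
    · exact hc
    · have heq := t.desc_eq_of_depth_le hc (hwmin w hw)
      rw [heq]
      exact t.desc_refl w₀
  have hw₀b' : t.desc w₀ b' :=
    t.desc_trans (hmind v₂ hv₂R) (locksAt_desc_thd hv₂.1)
  rcases (Finset.mem_filter.mp hw₀R).2 with ⟨β₁, hT⟩ | ⟨β₁, hT⟩
  · -- the highest locking tree has `a` as locked leaf
    have hthd : β₁ = b' := by
      rcases (locksAt_mem hT.1 b').mp ⟨hb'leaf, hw₀b'⟩ with h | h | h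
      · exact absurd h hL.2.2.2.1
      · exact absurd h.symm hL.2.2.1
      · exact h.symm
    rw [hthd] at hT
    have htb : ∀ c c' v', IsLockingTree t E b c c' v' → t.desc w₀ v' := by
      intro c c' v' hT'
      have hc : a = c := twin_unique htw' hT'.1.2.2.2.2.2.1
      refine hmind v' (Finset.mem_filter.mpr ⟨Finset.mem_univ _, Or.inr ⟨c', ?_⟩⟩)
      rw [hc]
      exact hT'
    obtain ⟨u, hu⟩ := exists_uplink (α := a) ⟨b, habE⟩
    exact hGNL a b b' w₀ u ⟨hT, hA, hB, hB', htb, hu⟩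
  · -- the highest locking tree has `b` as locked leaf
    have hthd : β₁ = b' := by
      rcases (locksAt_mem hT.1 b').mp ⟨hb'leaf, hw₀b'⟩ with h | h | h
      · exact absurd h.symm hL.2.2.1
      · exact absurd h hL.2.2.2.1
      · exact h.symm
    rw [hthd] at hT
    have htb : ∀ c c' v', IsLockingTree t E a c c' v' → t.desc w₀ v' := by
      intro c c' v' hT'
      have hc : b = c := twin_unique htw hT'.1.2.2.2.2.2.1
      refine hmind v' (Finset.mem_filter.mpr ⟨Finset.mem_univ _, Or.inl ⟨c', ?_⟩⟩)
      rw [hc]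
      exact hT'
    obtain ⟨u, hu⟩ := exists_uplink (α := b) ⟨a, by rw [Sym2.eq_swap]; exact habE⟩
    exact hGNL b a b' w₀ u ⟨hT, hB, hA, hB', htb, hu⟩

/-- Core of the greedy-link-contraction case of the invariant: if a greedy contraction
uses a link at `b`, then afterwards either `a ~ b`, or `b ~ p`. -/
lemma psi_link_core {M I : Finset (Sym2 V)} {a b b' v s p y : V} {e₀ : Sym2 V}
    (htw : TwinPair t a b)
    (hsa : t.desc s a) (hsb : t.desc s b)
    (hsmax : ∀ w, t.desc w a → t.desc w b → t.desc w s)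
    (hleavesv : ∀ ℓ, t.IsLeaf ℓ → t.desc v ℓ → ℓ = a ∨ ℓ = b ∨ ℓ = b')
    (hpb : t.desc p b) (hvp : t.desc v p)
    (he₀ : e₀ ∈ M) (hb'e₀ : b' ∈ e₀)
    (hnrel : ¬ rel t I b y) (hqy : qleafRep t I y) (hmy : ¬ matchedRep t I M y) :
    rel t (insert (s(b, y)) I) a b ∨ rel t (insert (s(b, y)) I) b p := by
  obtain ⟨ℓ, hlleaf, hlrel⟩ := exists_leaf_rep hqy
  have hlink : rel t (insert (s(b, y)) I) b y :=
    rel_of_link_mem (Finset.mem_insert_self _ _)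
  have hbl : rel t (insert (s(b, y)) I) b ℓ :=
    rel_trans hlink (rel_mono (Finset.subset_insert _ _) (rel_symm hlrel))
  by_cases hds : t.desc s ℓ
  · rcases twin_leaves htw s hsa hsb hsmax hlleaf hds with h | h
    · rw [h] at hbl
      exact Or.inl (rel_symm hbl)
    · rw [h] at hlrel
      exact absurd hlrel hnrel
  · by_cases hdv : t.desc v ℓ
    · rcases hleavesv ℓ hlleaf hdv with h | h | h
      · exact absurd (h.symm ▸ hsa : t.desc s ℓ) hds
      · rw [h] at hlrel
        exact absurd hlrel hnrel
      · rw [h] at hlrel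
        exact absurd ⟨e₀, he₀, b', hb'e₀, hlrel⟩ hmy
    · refine Or.inr (rel_symm (rel_ancestor (rel_symm hbl) hpb fun hd =>
        hdv (t.desc_trans hvp hd)))

/-- The main invariant along the Partial Solution process: for the locked twin pair
`a, b` (with `b`, `b'` unmatched), either `a` and `b` are already contracted together,
or the class of `b` is trivial, or `b` has been contracted past `p = lca(b, b')`. -/
lemma psi_inv {E M I : Finset (Sym2 V)} {a b b' v s p : V} {e₀ : Sym2 V}
    (hnd : ∀ e ∈ E, ¬ e.IsDiag)
    (htw : TwinPair t a b) (habE : s(a, b) ∈ E)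
    (hbleaf : t.IsLeaf b)
    (hsa : t.desc s a) (hsb : t.desc s b)
    (hsmax : ∀ w, t.desc w a → t.desc w b → t.desc w s)
    (hleavesv : ∀ ℓ, t.IsLeaf ℓ → t.desc v ℓ → ℓ = a ∨ ℓ = b ∨ ℓ = b')
    (hpb : t.desc p b) (hvp : t.desc v p)
    (hB : ∀ e ∈ M, b ∉ e)
    (he₀ : e₀ ∈ M) (hb'e₀ : b' ∈ e₀)
    (hGNL : NoLockCfg t E M)
    (hI : PSI t E M I) :
    rel t I a b ∨ (∀ z, rel t I z b → z = b) ∨ rel t I b p := by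
  induction hI with
  | @start I₁ h1 h2 =>
    right; left
    intro z hz
    rw [lockphase_empty hGNL h1] at hz
    exact rel_empty_eq hz
  | @link I₁ I₂ h1 h2 ih =>
    obtain ⟨x, y, hxyE, hnrel, hqx, hqy, hmx, hmy, rfl⟩ := h2
    rcases ih with hab | htriv | hbp
    · exact Or.inl (rel_mono (Finset.subset_insert _ _) hab)
    · by_cases hbx : b = x
      · subst hbx
        rcases psi_link_core htw hsa hsb hsmax hleavesv hpb hvp he₀ hb'e₀
          hnrel hqy hmy with h | h
        · exact Or.inl h
        · exact Or.inr (Or.inr h)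
      · by_cases hby : b = y
        · subst hby
          rw [show s(x, b) = s(b, x) from Sym2.eq_swap]
          have hnrel' : ¬ rel t I₁ b x := fun h => hnrel (rel_symm h)
          rcases psi_link_core htw hsa hsb hsmax hleavesv hpb hvp he₀ hb'e₀
            hnrel' hqx hmx with h | h
          · exact Or.inl h
          · exact Or.inr (Or.inr h)
        · right; left
          intro z hz
          by_contra hne
          obtain ⟨e, he, hc⟩ := coveredBy_at_leaf hbleaf hz hne
          have hbe := covers_mem_leaf hbleaf hc
          rcases Finset.mem_insert.mp he with rfl | heI
          · rcases Sym2.mem_iff.mp hbe with h | h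
            · exact hbx h
            · exact hby h
          · exact trivial_class_contra hnd (psi_subE h1) hbleaf htriv ⟨e, heI, hc⟩
    · exact Or.inr (Or.inr (rel_mono (Finset.subset_insert _ _) hbp))
  | @semi I₁ I₂ h1 h2 ih =>
    obtain ⟨c₁, I', hI'E, hsc₁, hexact, rfl⟩ := h2
    rcases ih with hab | htriv | hbp
    · exact Or.inl (rel_mono Finset.subset_union_left hab)
    · by_cases hcb : coveredBy t I' b
      · -- `b` is a leaf of the contracted semi-closed tree; then `a` is in it too,
        -- and the exact cover contracts the whole twin path.
        left
        have hncov : ¬ coveredBy t I₁ b := fun hc =>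
          trivial_class_contra hnd (psi_subE h1) hbleaf htriv hc
        have hinpb : inT t I₁ c₁ (t.parent b) := (hexact b hbleaf.1 hncov).mp hcb
        have hinb : inT t I₁ c₁ b := by
          obtain ⟨w₂, ⟨n, hn⟩, hr₂⟩ := inT_def.mp hinpb
          exact inT_def.mpr
            ⟨w₂, ⟨n + 1, by rw [Function.iterate_succ_apply]; exact hn⟩, hr₂⟩
        have hqb : qleafRep t I₁ b := qleaf_of_trivial hbleaf htriv
        have hmb : ¬ matchedRep t I₁ M b := by
          rintro ⟨e, he, z, hze, hz⟩
          exact hB e he ((htriv z hz) ▸ hze)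
        have hina : inT t I₁ c₁ a :=
          hsc₁.2 b a (by rw [Sym2.eq_swap]; exact habE) hinb hqb hmb
        intro w hw hp
        by_cases hcw : coveredBy t I₁ w
        · obtain ⟨e, he, hce⟩ := hcw
          exact ⟨e, Finset.mem_union_left _ he, hce⟩
        · have hparent : inT t I₁ c₁ (t.parent w) := by
            rcases hp with ⟨hwa, hwb⟩ | ⟨hwb, hwa⟩
            · have hws : t.desc s w := by
                rcases t.desc_total hwa hsa with h | h
                · exact absurd (t.desc_trans h hsb) hwb
                · exact h
              have hwnes : w ≠ s := fun hh => hwb (by rw [hh]; exact hsb)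
              exact inT_between hina hinb hsa hsb hsmax (t.desc_parent_anc hwa)
                (t.desc_parent_of_desc hws hwnes)
            · have hws : t.desc s w := by
                rcases t.desc_total hwb hsb with h | h
                · exact absurd (t.desc_trans h hsa) hwa
                · exact h
              have hwnes : w ≠ s := fun hh => hwa (by rw [hh]; exact hsa)
              exact inT_between hinb hina hsb hsa (fun w' h1' h2' => hsmax w' h2' h1')
                (t.desc_parent_anc hwb) (t.desc_parent_of_desc hws hwnes)
          obtain ⟨e, he, hce⟩ := (hexact w hw hcw).mpr hparent
          exact ⟨e, Finset.mem_union_right _ he, hce⟩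
      · right; left
        intro z hz
        by_contra hne
        obtain ⟨e, he, hc⟩ := coveredBy_at_leaf hbleaf hz hne
        rcases Finset.mem_union.mp he with heI | heI'
        · exact trivial_class_contra hnd (psi_subE h1) hbleaf htriv ⟨e, heI, hc⟩
        · exact hcb ⟨e, heI', hc⟩
    · exact Or.inr (Or.inr (rel_mono Finset.subset_union_left hbp))

end Aux18c

/-- under the Credit and Partial Solution Invariants, for a semi-closed
tree `T'` with `|M'| = 0` and a link `e = a'x ∈ F` with `a' ∈ L'` and `x ∈ X'`, the
original endpoint `a` of `e` is not a locked leaf, and thus `e` contributes a ticket at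
`x`. -/
theorem no_locked_endpoint (t : Tree V) (E F M I : Finset (Sym2 V))
    (hnd : ∀ e ∈ E, ¬ e.IsDiag) (hsh : ShadowClosed t E) (hEcov : IsCover t E)
    (hF : IsGoodCover t E F) (hM : IsMaxLeafMatching t E M)
    (hMW : ∀ e ∈ M, ¬ IsTwinLinkE t e ∧ ¬ IsLockingLink t E e)
    (hCI : CreditInvariant t E F M I) (hPSI : PSI t E M I)
    (hnoGreedy : ∀ I₂, ¬ LinkStep t E M I I₂)
    (c : QT t I) (hsc : SemiClosedQ t I E M c) (hM0 : (MlinksQ t I M c).card = 0)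
    (a x : V) (haF : s(a, x) ∈ F)
    (haT : inT t I c a) (haleaf : qleafRep t I a)
    (hxT : inT t I c x) (hxorig : ¬ qcompoundRep t I x) (hxX : x ∈ Xset t E) :
    ¬ IsLockedLeaf t E a ∧ s(a, x) ∈ Jlinks t E F := by
  -- `x` is not a locked leaf (it is not even a leaf).
  have hxnl : ¬ IsLockedLeaf t E x := by
    rintro ⟨b₁, b₁', v₁, hLx⟩
    exact (Finset.mem_filter.mp hxX).2.1 hLx.2.2.2.2.2.1.1
  -- `a` is not a locked leaf.
  have hanl : ¬ IsLockedLeaf t E a := by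
    rintro ⟨b, b', v, hL⟩
    have htw : TwinPair t a b := hL.2.2.2.2.2.1
    have habE : s(a, b) ∈ E := hL.2.2.2.2.2.2.1
    have hbb'E : s(b, b') ∈ E := hL.2.1
    have hbleaf : t.IsLeaf b := htw.2.1
    have hb'leaf : t.IsLeaf b' := locksAt_leaf_thd hL
    have hvb : t.desc v b := locksAt_desc_snd hL
    have hvb' : t.desc v b' := locksAt_desc_thd hL
    have hleavesv : ∀ ℓ, t.IsLeaf ℓ → t.desc v ℓ → ℓ = a ∨ ℓ = b ∨ ℓ = b' :=
      fun ℓ h1 h2 => (locksAt_mem hL ℓ).mp ⟨h1, h2⟩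
    obtain ⟨s, hsa, hsb, hsmax⟩ := t.exists_lca a b
    obtain ⟨p, hpb, hpb', hpmax⟩ := t.exists_lca b b'
    have hvp : t.desc v p := hpmax v hvb hvb'
    have hGNL := psi_gnl hPSI
    have hma : ¬ matchedRep t I M a := unmatched_of_inT hsc hM0 haT
    have hA : ∀ e ∈ M, a ∉ e := notmem_of_unmatched hma
    have hinb : inT t I c b := hsc.2 a b habE haT haleaf hma
    have hmb : ¬ matchedRep t I M b := unmatched_of_inT hsc hM0 hinb
    have hB : ∀ e ∈ M, b ∉ e := notmem_of_unmatched hmb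
    by_cases hb'm : ∃ e ∈ M, b' ∈ e
    · -- `b'` matched: use the invariant on the partial solution.
      obtain ⟨e₀, he₀, hb'e₀⟩ := hb'm
      have hmb' : matchedRep t I M b' := ⟨e₀, he₀, b', hb'e₀, rel_refl t I b'⟩
      rcases psi_inv hnd htw habE hbleaf hsa hsb hsmax hleavesv hpb hvp hB he₀
          hb'e₀ hGNL hPSI with hab | htriv | hbp
      · -- `a ~ b`: the class of `b` is an unmatched leaf of `T/I`, so `b' ∈ T'`.
        have hqb : qleafRep t I b := qleaf_transport hab haleaf
        have hinb' : inT t I c b' := hsc.2 b b' hbb'E hinb hqb hmb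
        exact unmatched_of_inT hsc hM0 hinb' hmb'
      · -- the class of `b` is trivial: a greedy link contraction is available.
        have hqb : qleafRep t I b := qleaf_of_trivial hbleaf htriv
        have hnrel : ¬ rel t I a b := fun h => htw.2.2.1 (htriv a h)
        exact hnoGreedy (insert (s(a, b)) I)
          ⟨a, b, habE, hnrel, haleaf, hqb, hma, hmb, rfl⟩
      · -- `b ~ p`: then `b'` lies in `T'`.
        have hinp : inT t I c p := inT_of_rel (rel_symm hbp) hinb
        have hinb' : inT t I c b' := inT_desc hinp hpb'
        exact unmatched_of_inT hsc hM0 hinb' hmb'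
    · -- `b'` unmatched: the greedy locking-tree contraction is available.
      push_neg at hb'm
      exact key_contra hGNL hL hA hB hb'm
  refine ⟨hanl, Finset.mem_filter.mpr ⟨haF, ?_⟩⟩
  intro y hy
  rcases Sym2.mem_iff.mp hy with rfl | rfl
  · exact hanl
  · exact hxnl


end TAP
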